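/- Let w ∈ (0,1) and L ∈ (0, 2π√w). Then there exists ε > 0 such that every continuously differentiable L-periodic function v : ℝ → ℝ with ∫₀^L v(x) dx = 0 and 0 < ∫₀^L v'(x)² dx ≤ ε² satisfies S_w(v) > 0. In particular the infimum of S_w over the sphere { v zero-mean, C¹, L-periodic : ∫₀^L (v')² dx = ε² } is strictly positive, while S_w(0) = 0. -/

import Mathlib

/-!
Wirtinger's inequality `∫ v² ≤ (L/2π)² ∫ v'²` for zero-mean `L`-periodic `v` follows from
Parseval's identity, since the Fourier coefficients satisfy `c_n(v') = (2πin/L) c_n(v)` and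
`c_0(v) = 0`. Moreover `v` vanishes somewhere, so `sup v² ≤ L ∫ v'²` by Cauchy–Schwarz.
On the set `L ∫ v'² ≤ η` we have `v² ≤ η`, hence `cosh v - 1 ≤ e^{η/2} v² / 2`, and therefore
`S_w(v) ≥ ½ (1 - e^{η/2} (L/2π)² / w) ∫ v'²`. The coefficient is positive for small `η`
precisely because `L < 2π√w`. Multiples of `sin (2πx/L)` show that every sphere is nonempty.
-/

open Real MeasureTheory Set Filter Topology
open scoped Interval

section Wirtinger

open Complex

theorem ContinuousOn.memLp_restrict_Ioc {E : Type*} [NormedAddCommGroup E] {f : ℝ → E} {a b : ℝ}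
    (p : ENNReal) (hf : ContinuousOn f (Icc a b)) : MemLp f p (volume.restrict (Ioc a b)) := by
  obtain ⟨C, hC⟩ := isCompact_Icc.exists_bound_of_continuousOn hf
  exact .of_bound ((hf.mono Ioc_subset_Icc_self).aestronglyMeasurable measurableSet_Ioc) C
    ((ae_restrict_iff' measurableSet_Ioc).2 (ae_of_all _ fun x hx ↦ hC x (Ioc_subset_Icc_self hx)))

theorem fourierCoeffOn_eq_of_hasDerivAt {a b : ℝ} (hab : a < b) {f f' : ℝ → ℂ} {n : ℤ}
    (hn : n ≠ 0) (hf : ∀ x ∈ [[a, b]], HasDerivAt f (f' x) x)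
    (hf' : IntervalIntegrable f' volume a b) (hfab : f a = f b) :
    fourierCoeffOn hab f n = (b - a) / (2 * π * I * n) * fourierCoeffOn hab f' n := by
  rw [fourierCoeffOn_of_hasDerivAt hab hn hf hf', hfab, sub_self, mul_zero, zero_sub]
  have : (2 * π * I * n : ℂ) ≠ 0 := by simp [hn, pi_ne_zero]
  field_simp

theorem norm_fourierCoeffOn_le_of_hasDerivAt {a b : ℝ} (hab : a < b) {f f' : ℝ → ℂ} {n : ℤ}
    (hn : n ≠ 0) (hf : ∀ x ∈ [[a, b]], HasDerivAt f (f' x) x)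
    (hf' : IntervalIntegrable f' volume a b) (hfab : f a = f b) :
    ‖fourierCoeffOn hab f n‖ ≤ (b - a) / (2 * π) * ‖fourierCoeffOn hab f' n‖ := by
  have hn1 : (1 : ℝ) ≤ |(n : ℝ)| := by exact_mod_cast Int.one_le_abs hn
  rw [fourierCoeffOn_eq_of_hasDerivAt hab hn hf hf' hfab, norm_mul]
  gcongr
  rw [norm_div, norm_mul, norm_mul, norm_mul]
  simp only [← ofReal_sub, norm_real, Complex.norm_ofNat, norm_intCast, norm_I, mul_one,
    Real.norm_of_nonneg pi_pos.le, Real.norm_of_nonneg (sub_pos.2 hab).le]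
  exact div_le_div_of_nonneg_left (sub_pos.2 hab).le (by positivity)
    (le_mul_of_one_le_right (by positivity) hn1)

theorem wirtinger_inequality_complex {a b : ℝ} (hab : a < b) {f f' : ℝ → ℂ}
    (hf : ∀ x ∈ [[a, b]], HasDerivAt f (f' x) x) (hf' : MemLp f' 2 (volume.restrict (Ioc a b)))
    (hfab : f a = f b) (hmean : ∫ x in a..b, f x = 0) :
    ∫ x in a..b, ‖f x‖ ^ 2 ≤ ((b - a) / (2 * π)) ^ 2 * ∫ x in a..b, ‖f' x‖ ^ 2 := by
  have hf'i : IntervalIntegrable f' volume a b :=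
    (intervalIntegrable_iff_integrableOn_Ioc_of_le hab.le).2 (hf'.integrable one_le_two)
  have hfc : ContinuousOn f (Icc a b) := fun x hx ↦
    (hf x (Icc_subset_uIcc hx)).continuousAt.continuousWithinAt
  have hcoeff (n : ℤ) : ‖fourierCoeffOn hab f n‖ ^ 2 ≤
      ((b - a) / (2 * π)) ^ 2 * ‖fourierCoeffOn hab f' n‖ ^ 2 := by
    rcases eq_or_ne n 0 with rfl | hn
    · have hzero : fourierCoeffOn hab f 0 = 0 := by simp [fourierCoeffOn_eq_integral, hmean]
      rw [hzero, norm_zero, zero_pow two_ne_zero]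
      positivity
    · rw [← mul_pow]
      gcongr
      exact norm_fourierCoeffOn_le_of_hasDerivAt hab hn hf hf'i hfab
  have parseval := hasSum_le hcoeff (hasSum_sq_fourierCoeffOn hab (hfc.memLp_restrict_Ioc 2))
    ((hasSum_sq_fourierCoeffOn hab hf').mul_left _)
  rw [smul_eq_mul, smul_eq_mul, mul_left_comm] at parseval
  exact le_of_mul_le_mul_left parseval (inv_pos.2 (sub_pos.2 hab))

theorem wirtinger_inequality {a b : ℝ} (hab : a < b) {v v' : ℝ → ℝ}
    (hv : ∀ x ∈ [[a, b]], HasDerivAt v (v' x) x) (hv' : MemLp v' 2 (volume.restrict (Ioc a b)))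
    (hvab : v a = v b) (hmean : ∫ x in a..b, v x = 0) :
    ∫ x in a..b, v x ^ 2 ≤ ((b - a) / (2 * π)) ^ 2 * ∫ x in a..b, v' x ^ 2 := by
  have := wirtinger_inequality_complex hab (f := fun x ↦ (v x : ℂ)) (f' := fun x ↦ (v' x : ℂ))
    (fun x hx ↦ (hv x hx).ofReal_comp) hv'.ofReal (by simp [hvab])
    (by rw [intervalIntegral.integral_ofReal, hmean, ofReal_zero])
  simpa only [norm_real, Real.norm_eq_abs, sq_abs] using this

end Wirtinger

theorem sq_intervalIntegral_le {a b : ℝ} (hab : a ≤ b) {f : ℝ → ℝ}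
    (hf : IntervalIntegrable f volume a b) (hf2 : IntervalIntegrable (fun x ↦ f x ^ 2) volume a b) :
    (∫ x in a..b, f x) ^ 2 ≤ (b - a) * ∫ x in a..b, f x ^ 2 := by
  set I := ∫ x in a..b, f x
  set J := ∫ x in a..b, f x ^ 2
  rcases hab.eq_or_lt with rfl | hlt
  · simp [I]
  have hexpand : ∫ x in a..b, ((b - a) * f x - I) ^ 2 = (b - a) * ((b - a) * J - I ^ 2) := by
    have (x : ℝ) : ((b - a) * f x - I) ^ 2 =
        (b - a) ^ 2 * f x ^ 2 - 2 * (b - a) * I * f x + I ^ 2 := by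
      ring
    simp_rw [this]
    rw [intervalIntegral.integral_add ((hf2.const_mul _).sub (hf.const_mul _))
        intervalIntegrable_const,
      intervalIntegral.integral_sub (hf2.const_mul _) (hf.const_mul _),
      intervalIntegral.integral_const_mul, intervalIntegral.integral_const_mul,
      intervalIntegral.integral_const, smul_eq_mul]
    ring
  have hnonneg : 0 ≤ ∫ x in a..b, ((b - a) * f x - I) ^ 2 :=
    intervalIntegral.integral_nonneg hab fun x _ ↦ sq_nonneg _
  rw [hexpand] at hnonneg
  linarith [(mul_nonneg_iff_of_pos_left (sub_pos.2 hlt)).1 hnonneg]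

theorem sq_le_mul_integral_sq_deriv {T : ℝ} (hT : 0 < T) {v v' : ℝ → ℝ}
    (hv : ∀ x, HasDerivAt v (v' x) x) (hv' : Continuous v') (hper : Function.Periodic v T)
    (hmean : ∫ x in 0..T, v x = 0) (y : ℝ) : v y ^ 2 ≤ T * ∫ x in 0..T, v' x ^ 2 := by
  have hvc : Continuous v := continuous_iff_continuousAt.2 fun x ↦ (hv x).continuousAt
  obtain ⟨c, hc, hvc0⟩ := exists_eq_interval_average hT.ne hvc.continuousOn
  rw [interval_average_eq_div, hmean, zero_div] at hvc0
  rw [uIoo_of_le hT.le] at hc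
  obtain ⟨x, hx, hyx⟩ := hper.exists_mem_Ico₀ hT y
  have hftc : v x = ∫ t in c..x, v' t := by
    rw [intervalIntegral.integral_eq_sub_of_hasDerivAt (fun t _ ↦ hv t)
      (hv'.intervalIntegrable _ _), hvc0, sub_zero]
  have hsub : Ι c x ⊆ Ioc 0 T := by
    rw [← uIoc_of_le hT.le]
    exact uIoc_subset_uIoc_of_uIcc_subset_uIcc <| uIcc_subset_uIcc_iff_mem.2
      ⟨Icc_subset_uIcc (Ioo_subset_Icc_self hc), Icc_subset_uIcc (Ico_subset_Icc_self hx)⟩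
  have habs : |v x| ≤ ∫ t in 0..T, |v' t| := calc
    |v x| = ‖∫ t in c..x, v' t‖ := by rw [hftc, Real.norm_eq_abs]
    _ ≤ ∫ t in Ι c x, ‖v' t‖ := intervalIntegral.norm_integral_le_integral_norm_uIoc
    _ ≤ ∫ t in Ioc 0 T, ‖v' t‖ :=
      setIntegral_mono_set hv'.norm.integrableOn_Ioc (ae_of_all _ fun t ↦ norm_nonneg _)
        hsub.eventuallyLE
    _ = ∫ t in 0..T, |v' t| := (intervalIntegral.integral_of_le hT.le).symm
  calc v y ^ 2 = |v x| ^ 2 := by rw [hyx, sq_abs]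
    _ ≤ (∫ t in 0..T, |v' t|) ^ 2 := pow_le_pow_left₀ (abs_nonneg _) habs 2
    _ ≤ T * ∫ t in 0..T, |v' t| ^ 2 := by
      simpa using sq_intervalIntegral_le hT.le (hv'.abs.intervalIntegrable _ _)
        ((hv'.abs.pow 2).intervalIntegrable _ _)
    _ = T * ∫ t in 0..T, v' t ^ 2 := by simp_rw [sq_abs]

theorem cosh_sub_one_le_of_sq_le {t η : ℝ} (h : t ^ 2 ≤ η) :
    cosh t - 1 ≤ exp (η / 2) / 2 * t ^ 2 := by
  have hexp : exp (t ^ 2 / 2) - 1 ≤ t ^ 2 / 2 * exp (t ^ 2 / 2) := by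
    have := mul_le_mul_of_nonneg_left (add_one_le_exp (-(t ^ 2 / 2))) (exp_pos (t ^ 2 / 2)).le
    rw [← exp_add, add_neg_cancel, exp_zero] at this
    linarith
  calc cosh t - 1 ≤ exp (t ^ 2 / 2) - 1 := by linarith [cosh_le_exp_half_sq t]
    _ ≤ t ^ 2 / 2 * exp (t ^ 2 / 2) := hexp
    _ ≤ t ^ 2 / 2 * exp (η / 2) := by gcongr
    _ = exp (η / 2) / 2 * t ^ 2 := by ring

theorem exists_periodic_integral_deriv_sq_eq {L c : ℝ} (hL : 0 < L) (hc : 0 ≤ c) :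
    ∃ v : ℝ → ℝ, ContDiff ℝ 1 v ∧ Function.Periodic v L ∧ ∫ x in 0..L, v x = 0 ∧
      ∫ x in 0..L, deriv v x ^ 2 = c := by
  set k := 2 * π / L
  set a := √(c * L / (2 * π ^ 2))
  have hk : k ≠ 0 := by positivity
  have hkL : k * L = 2 * π := div_mul_cancel₀ _ hL.ne'
  have hderiv : deriv (fun x ↦ a * sin (k * x)) = fun x ↦ a * k * cos (k * x) := by
    ext x
    have : HasDerivAt (fun x ↦ a * sin (k * x)) (a * (cos (k * x) * k)) x :=
      (((hasDerivAt_id' x).const_mul k).sin.const_mul a).congr_deriv (by ring)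
    rw [this.deriv]
    ring
  refine ⟨fun x ↦ a * sin (k * x), by fun_prop, fun x ↦ ?_, ?_, ?_⟩
  · simp only [mul_add, hkL, sin_add_two_pi]
  · rw [intervalIntegral.integral_const_mul, intervalIntegral.integral_comp_mul_left _ hk, mul_zero,
      hkL, integral_sin, cos_two_pi, cos_zero, sub_self, smul_zero, mul_zero]
  · have ha : a ^ 2 = c * L / (2 * π ^ 2) := sq_sqrt (by positivity)
    simp_rw [hderiv, mul_pow, intervalIntegral.integral_const_mul]
    rw [intervalIntegral.integral_comp_mul_left (fun x ↦ cos x ^ 2) hk, mul_zero, hkL,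
      integral_cos_sq, sin_two_pi, sin_zero, ha, smul_eq_mul]
    field_simp
    linear_combination (2 * c * π) * hkL

theorem integral_cosh_sub_one_le {L η : ℝ} (hL : 0 < L) {v v' : ℝ → ℝ}
    (hv : ∀ x, HasDerivAt v (v' x) x) (hv' : Continuous v') (hper : Function.Periodic v L)
    (hmean : ∫ x in 0..L, v x = 0) (hη : L * ∫ x in 0..L, v' x ^ 2 ≤ η) :
    ∫ x in 0..L, (cosh (v x) - 1) ≤
      exp (η / 2) / 2 * ((L / (2 * π)) ^ 2 * ∫ x in 0..L, v' x ^ 2) := by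
  have hvc : Continuous v := continuous_iff_continuousAt.2 fun x ↦ (hv x).continuousAt
  have hwirt := wirtinger_inequality hL (fun x _ ↦ hv x) (hv'.continuousOn.memLp_restrict_Ioc 2)
    (by simpa using (hper 0).symm) hmean
  rw [sub_zero] at hwirt
  calc ∫ x in 0..L, (cosh (v x) - 1) ≤ ∫ x in 0..L, exp (η / 2) / 2 * v x ^ 2 :=
        intervalIntegral.integral_mono_on hL.le
          ((continuous_cosh.comp hvc).sub continuous_const |>.intervalIntegrable _ _)
          (continuous_const.mul (hvc.pow 2) |>.intervalIntegrable _ _)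
          fun x _ ↦ cosh_sub_one_le_of_sq_le
            ((sq_le_mul_integral_sq_deriv hL hv hv' hper hmean x).trans hη)
    _ = exp (η / 2) / 2 * ∫ x in 0..L, v x ^ 2 := intervalIntegral.integral_const_mul _ _
    _ ≤ exp (η / 2) / 2 * ((L / (2 * π)) ^ 2 * ∫ x in 0..L, v' x ^ 2) := by gcongr

theorem le_integral_action {w L η : ℝ} (hw : 0 < w) (hL : 0 < L) {v v' : ℝ → ℝ}
    (hv : ∀ x, HasDerivAt v (v' x) x) (hv' : Continuous v') (hper : Function.Periodic v L)
    (hmean : ∫ x in 0..L, v x = 0) (hη : L * ∫ x in 0..L, v' x ^ 2 ≤ η) :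
    (1 - exp (η / 2) * ((L / (2 * π)) ^ 2 / w)) / 2 * ∫ x in 0..L, v' x ^ 2 ≤
      ∫ x in 0..L, (v' x ^ 2 / 2 - cosh (v x) / w + 1 / w) := by
  have hvc : Continuous v := continuous_iff_continuousAt.2 fun x ↦ (hv x).continuousAt
  have hsplit : ∫ x in 0..L, (v' x ^ 2 / 2 - cosh (v x) / w + 1 / w) =
      (∫ x in 0..L, v' x ^ 2) / 2 - (∫ x in 0..L, (cosh (v x) - 1)) / w := by
    rw [intervalIntegral.integral_congr (g := fun x ↦ v' x ^ 2 / 2 - (cosh (v x) - 1) / w)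
        fun x _ ↦ by ring,
      intervalIntegral.integral_sub
        ((by fun_prop : Continuous fun x ↦ v' x ^ 2 / 2).intervalIntegrable _ _)
        ((by fun_prop : Continuous fun x ↦ (cosh (v x) - 1) / w).intervalIntegrable _ _),
      intervalIntegral.integral_div, intervalIntegral.integral_div]
  have hcosh := div_le_div_of_nonneg_right
    (integral_cosh_sub_one_le hL hv hv' hper hmean hη) hw.le
  rw [hsplit]
  calc (1 - exp (η / 2) * ((L / (2 * π)) ^ 2 / w)) / 2 * ∫ x in 0..L, v' x ^ 2
      = (∫ x in 0..L, v' x ^ 2) / 2 -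
          exp (η / 2) / 2 * ((L / (2 * π)) ^ 2 * ∫ x in 0..L, v' x ^ 2) / w := by ring
    _ ≤ _ := sub_le_sub_left hcosh _

theorem mountain_pass_geometry
    (w L : ℝ) (hw : w ∈ Set.Ioo (0:ℝ) 1)
    (hL : L ∈ Set.Ioo (0:ℝ) (2 * π * Real.sqrt w)) :
    ∃ ε : ℝ, 0 < ε ∧
      (∀ v : ℝ → ℝ, ContDiff ℝ 1 v → (∀ x, v (x + L) = v x) →
        (∫ x in (0:ℝ)..L, v x) = 0 →
        0 < (∫ x in (0:ℝ)..L, (deriv v x)^2) →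
        (∫ x in (0:ℝ)..L, (deriv v x)^2) ≤ ε^2 →
        0 < ∫ x in (0:ℝ)..L,
          ((deriv v x)^2 / 2 - Real.cosh (v x) / w + 1 / w)) ∧
      0 < sInf {s : ℝ | ∃ v : ℝ → ℝ, ContDiff ℝ 1 v ∧ (∀ x, v (x + L) = v x) ∧
            (∫ x in (0:ℝ)..L, v x) = 0 ∧
            (∫ x in (0:ℝ)..L, (deriv v x)^2) = ε^2 ∧
            s = ∫ x in (0:ℝ)..L,
              ((deriv v x)^2 / 2 - Real.cosh (v x) / w + 1 / w)} ∧
      (∫ x in (0:ℝ)..L,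
        ((deriv (fun _ : ℝ => (0:ℝ)) x)^2 / 2 - Real.cosh 0 / w + 1 / w)) = 0 := by
  obtain ⟨hw, -⟩ := hw
  obtain ⟨hL, hLw⟩ := hL
  set r := (L / (2 * π)) ^ 2 / w
  have hr : r < 1 := (div_lt_one hw).2 <| (lt_sqrt (by positivity)).1 <|
    (div_lt_iff₀ (by positivity)).2 (by linarith)
  have hexp : Tendsto (fun η ↦ exp (η / 2) * r) (𝓝 0) (𝓝 r) :=
    (by fun_prop : Continuous fun η ↦ exp (η / 2) * r).tendsto' 0 r (by simp)
  obtain ⟨η, hη, hηr⟩ := (hexp.eventually (gt_mem_nhds hr)).exists_gt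
  set ε := √(η / L)
  have hLε : L * ε ^ 2 = η := by rw [sq_sqrt (by positivity), mul_div_cancel₀ _ hL.ne']
  have hκ : 0 < (1 - exp (η / 2) * r) / 2 := by linarith
  have hbound (v : ℝ → ℝ) (hv : ContDiff ℝ 1 v) (hper : ∀ x, v (x + L) = v x)
      (hmean : (∫ x in (0:ℝ)..L, v x) = 0) (hD : (∫ x in (0:ℝ)..L, (deriv v x)^2) ≤ ε^2) :
      (1 - exp (η / 2) * r) / 2 * ∫ x in (0:ℝ)..L, (deriv v x)^2 ≤
        ∫ x in (0:ℝ)..L, ((deriv v x)^2 / 2 - Real.cosh (v x) / w + 1 / w) :=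
    le_integral_action hw hL (fun x ↦ (hv.differentiable one_ne_zero x).hasDerivAt)
      (hv.continuous_deriv le_rfl) hper hmean (hLε ▸ mul_le_mul_of_nonneg_left hD hL.le)
  refine ⟨ε, by positivity, fun v hv hper hmean hpos hD ↦ ?_, ?_, by simp⟩
  · exact (mul_pos hκ hpos).trans_le (hbound v hv hper hmean hD)
  · obtain ⟨v₀, hv₀, hper₀, hmean₀, hD₀⟩ := exists_periodic_integral_deriv_sq_eq hL (sq_nonneg ε)
    refine (mul_pos hκ (by positivity : 0 < ε ^ 2)).trans_le
      (le_csInf ⟨_, v₀, hv₀, hper₀, hmean₀, hD₀, rfl⟩ ?_)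
    rintro _ ⟨v, hv, hper, hmean, hD, rfl⟩
    simpa only [hD] using hbound v hv hper hmean hD.le
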